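/- arXiv:1602.02270 — 3 statements merged into one kernel-verified Lean document; each statement's English description precedes it below -/
import Mathlib

section
/- There exist two sets A, B ⊆ ℕ that are Turing incomparable: A is not computable from B and B is not computable from A. (Kleene–Post theorem.) -/
/-- Partial functions `ℕ →. ℕ` computable relative to an oracle `O : ℕ → ℕ`. -/
inductive RecursiveInFn (O : ℕ → ℕ) : (ℕ →. ℕ) → Prop
  | oracle : RecursiveInFn O (fun n => Part.some (O n))
  | zero : RecursiveInFn O (pure 0)
  | succ : RecursiveInFn O Nat.succ
  | left : RecursiveInFn O ↑fun n : ℕ => n.unpair.1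
  | right : RecursiveInFn O ↑fun n : ℕ => n.unpair.2
  | pair {f g} : RecursiveInFn O f → RecursiveInFn O g →
      RecursiveInFn O fun n => Nat.pair <$> f n <*> g n
  | comp {f g} : RecursiveInFn O f → RecursiveInFn O g →
      RecursiveInFn O fun n => g n >>= f
  | prec {f g} : RecursiveInFn O f → RecursiveInFn O g →
      RecursiveInFn O (Nat.unpaired fun a n =>
        n.rec (f a) fun y IH => do let i ← IH; g (Nat.pair a (Nat.pair y i)))
  | rfind {f} : RecursiveInFn O f →
      RecursiveInFn O fun a => Nat.rfind fun n => (fun m => m = 0) <$> f (Nat.pair a n)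

/-- The characteristic function of a set of naturals (as a `ℕ → Bool`). -/
def charFn (A : ℕ → Bool) : ℕ → ℕ := fun n => if A n then 1 else 0

/-- Turing reducibility: `A ≤_T B` iff the characteristic function of `A` is
computable with oracle `B`. -/
def TuringLE (A B : ℕ → Bool) : Prop :=
  RecursiveInFn (charFn B) (fun n => Part.some (charFn A n))

/-!
Finite extension. Enumerate the oracle programs as `e 0, e 1, …` and build two increasing
sequences of finite initial segments, arranging at stage `s` that `e s` computes neither limit
set from the other. To defeat `A = Φ^B` at the first position `x` not yet fixed in `A`: if some
`B` extending the current segment makes `Φ^B(x)` converge, then by the use principle it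
converges to the same value for every oracle agreeing with `B` on a finite initial segment, so
we fix that segment of `B` and give `A(x)` the other value; otherwise `Φ^B(x)` diverges for
every admissible `B`, and nothing needs to be done.
-/

open Set

/-- Programs for `RecursiveInFn`; unlike the functions they denote, they form a countable type. -/
inductive OracleCode : Type
  | oracle
  | zero
  | succ
  | left
  | right
  | pair (cf cg : OracleCode)
  | comp (cf cg : OracleCode)
  | prec (cf cg : OracleCode)
  | rfind (cf : OracleCode)
  deriving Inhabited, Countable

namespace OracleCode

def eval (O : ℕ → ℕ) : OracleCode → ℕ →. ℕ
  | oracle => fun n => Part.some (O n)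
  | zero => pure 0
  | succ => Nat.succ
  | left => ↑fun n : ℕ => n.unpair.1
  | right => ↑fun n : ℕ => n.unpair.2
  | pair cf cg => fun n => Nat.pair <$> eval O cf n <*> eval O cg n
  | comp cf cg => fun n => eval O cg n >>= eval O cf
  | prec cf cg => Nat.unpaired fun a n =>
      n.rec (eval O cf a) fun y IH => do let i ← IH; eval O cg (Nat.pair a (Nat.pair y i))
  | rfind cf => fun a => Nat.rfind fun n => (fun m => m = 0) <$> eval O cf (Nat.pair a n)

end OracleCode

theorem RecursiveInFn.exists_eval_eq {O : ℕ → ℕ} {f : ℕ →. ℕ} (h : RecursiveInFn O f) :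
    ∃ c : OracleCode, c.eval O = f := by
  induction h with
  | oracle => exact ⟨.oracle, rfl⟩
  | zero => exact ⟨.zero, rfl⟩
  | succ => exact ⟨.succ, rfl⟩
  | left => exact ⟨.left, rfl⟩
  | right => exact ⟨.right, rfl⟩
  | pair _ _ ihf ihg =>
    obtain ⟨cf, rfl⟩ := ihf
    obtain ⟨cg, rfl⟩ := ihg
    exact ⟨.pair cf cg, rfl⟩
  | comp _ _ ihf ihg =>
    obtain ⟨cf, rfl⟩ := ihf
    obtain ⟨cg, rfl⟩ := ihg
    exact ⟨.comp cf cg, rfl⟩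
  | prec _ _ ihf ihg =>
    obtain ⟨cf, rfl⟩ := ihf
    obtain ⟨cg, rfl⟩ := ihg
    exact ⟨.prec cf cg, rfl⟩
  | rfind _ ihf =>
    obtain ⟨cf, rfl⟩ := ihf
    exact ⟨.rfind cf, rfl⟩

def HasFiniteUse {β α : Type*} (F : (ℕ → β) → Part α) : Prop :=
  ∀ ⦃O : ℕ → β⦄ ⦃a : α⦄, a ∈ F O → ∃ u, ∀ O', EqOn O' O (Iio u) → a ∈ F O'

namespace HasFiniteUse

variable {α β γ : Type*}

theorem const (p : Part α) : HasFiniteUse fun _ : ℕ → β => p :=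
  fun _ _ h => ⟨0, fun _ _ => h⟩

theorem apply (n : ℕ) : HasFiniteUse fun O : ℕ → β => Part.some (O n) := by
  intro O a h
  refine ⟨n + 1, fun O' hO' => ?_⟩
  rw [Part.mem_some_iff] at h ⊢
  rw [h, hO' n.lt_succ_self]

theorem bind {F : (ℕ → β) → Part α} {G : α → (ℕ → β) → Part γ} (hF : HasFiniteUse F)
    (hG : ∀ a, HasFiniteUse (G a)) : HasFiniteUse fun O => (F O).bind fun a => G a O := by
  intro O c h
  obtain ⟨a, ha, hc⟩ := Part.mem_bind_iff.1 h
  obtain ⟨u, hu⟩ := hF ha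
  obtain ⟨v, hv⟩ := hG a hc
  exact ⟨max u v, fun O' hO' => Part.mem_bind_iff.2
    ⟨a, hu O' (hO'.mono (Iio_subset_Iio (le_max_left u v))),
      hv O' (hO'.mono (Iio_subset_Iio (le_max_right u v)))⟩⟩

theorem map {F : (ℕ → β) → Part α} (hF : HasFiniteUse F) (f : α → γ) :
    HasFiniteUse fun O => (F O).map f := by
  intro O c h
  obtain ⟨a, ha, rfl⟩ := (Part.mem_map_iff f).1 h
  obtain ⟨u, hu⟩ := hF ha
  exact ⟨u, fun O' hO' => Part.mem_map f (hu O' hO')⟩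

theorem exists_use_forall_lt {F : ℕ → (ℕ → β) → Part α} (hF : ∀ n, HasFiniteUse (F n))
    {O : ℕ → β} {a : ℕ → α} (m : ℕ) (h : ∀ k < m, a k ∈ F k O) :
    ∃ u, ∀ O', EqOn O' O (Iio u) → ∀ k < m, a k ∈ F k O' := by
  induction m with
  | zero => exact ⟨0, fun _ _ k hk => absurd hk k.not_lt_zero⟩
  | succ m ih =>
    obtain ⟨u, hu⟩ := ih fun k hk => h k (Nat.lt_succ_of_lt hk)
    obtain ⟨v, hv⟩ := hF m (h m m.lt_succ_self)
    refine ⟨max u v, fun O' hO' k hk => ?_⟩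
    rcases Nat.lt_succ_iff_lt_or_eq.1 hk with hk | rfl
    · exact hu O' (hO'.mono (Iio_subset_Iio (le_max_left u v))) k hk
    · exact hv O' (hO'.mono (Iio_subset_Iio (le_max_right u v)))

theorem rfind {F : ℕ → (ℕ → β) → Part Bool} (hF : ∀ n, HasFiniteUse (F n)) :
    HasFiniteUse fun O => Nat.rfind fun n => F n O := by
  intro O m h
  obtain ⟨hm, hlt⟩ := Nat.mem_rfind.1 h
  obtain ⟨u, hu⟩ := hF m hm
  obtain ⟨v, hv⟩ := exists_use_forall_lt hF (a := fun _ => false) m fun k hk => hlt hk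
  exact ⟨max u v, fun O' hO' => Nat.mem_rfind.2
    ⟨hu O' (hO'.mono (Iio_subset_Iio (le_max_left u v))),
      fun hk => hv O' (hO'.mono (Iio_subset_Iio (le_max_right u v))) _ hk⟩⟩

end HasFiniteUse

namespace OracleCode

theorem hasFiniteUse_eval (c : OracleCode) (n : ℕ) : HasFiniteUse fun O => c.eval O n := by
  induction c generalizing n with
  | oracle => exact HasFiniteUse.apply n
  | zero | succ | left | right => exact HasFiniteUse.const _
  | pair cf cg hf hg => exact ((hf n).map _).bind fun _ => (hg n).map _
  | comp cf cg hf hg => exact (hg n).bind hf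
  | prec cf cg hf hg =>
    suffices ∀ a k, HasFiniteUse fun O => Nat.rec (motive := fun _ => Part ℕ) (cf.eval O a)
        (fun y IH => IH.bind fun i => cg.eval O (Nat.pair a (Nat.pair y i))) k from
      this n.unpair.1 n.unpair.2
    intro a k
    induction k with
    | zero => exact hf a
    | succ k ih => exact ih.bind fun _ => hg _
  | rfind cf hf => exact HasFiniteUse.rfind fun k => (hf _).map _

end OracleCode

theorem Set.EqOn.charFn {A B : ℕ → Bool} {s : Set ℕ} (h : EqOn A B s) :
    EqOn (charFn A) (charFn B) s :=
  fun _ hi => by simp only [_root_.charFn, h hi]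

namespace KleenePost

/-- The initial segment of length `len` of `val`; the values of `val` from `len` on are
irrelevant. -/
structure Condition where
  len : ℕ
  val : ℕ → Bool

namespace Condition

def PrefixOf (p : Condition) (A : ℕ → Bool) : Prop :=
  EqOn A p.val (Iio p.len)

instance : Preorder Condition where
  le p q := p.len ≤ q.len ∧ p.PrefixOf q.val
  le_refl p := ⟨le_rfl, eqOn_refl _ _⟩
  le_trans _ _ _ hpq hqr := ⟨hpq.1.trans hqr.1, (hqr.2.mono (Iio_subset_Iio hpq.1)).trans hpq.2⟩

theorem PrefixOf.of_le {p q : Condition} {A : ℕ → Bool} (hpq : p ≤ q) (hA : q.PrefixOf A) :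
    p.PrefixOf A :=
  (hA.mono (Iio_subset_Iio hpq.1)).trans hpq.2

theorem le_succ_len (p : Condition) : p ≤ ⟨p.len + 1, p.val⟩ :=
  ⟨p.len.le_succ, eqOn_refl _ _⟩

def limit (p : ℕ → Condition) (i : ℕ) : Bool :=
  (p (i + 1)).val i

theorem prefixOf_limit {p : ℕ → Condition} (hp : Monotone p) (hlen : ∀ s, s ≤ (p s).len)
    (s : ℕ) : (p s).PrefixOf (limit p) := by
  intro i hi
  rcases le_total (i + 1) s with h | h
  · exact ((hp h).2 (lt_of_lt_of_le i.lt_succ_self (hlen _))).symm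
  · exact (hp h).2 hi

end Condition

open Condition

def ForcesNotComputes (c : OracleCode) (p q : Condition) : Prop :=
  ∀ A B, p.PrefixOf A → q.PrefixOf B → c.eval (charFn B) ≠ fun n => Part.some (charFn A n)

theorem ForcesNotComputes.of_le {c : OracleCode} {p q p' q' : Condition}
    (h : ForcesNotComputes c p q) (hp : p ≤ p') (hq : q ≤ q') : ForcesNotComputes c p' q' :=
  fun A B hA hB => h A B (hA.of_le hp) (hB.of_le hq)

theorem exists_forcesNotComputes (c : OracleCode) (p q : Condition) :
    ∃ r : Condition × Condition, (p, q) ≤ r ∧ p.len < r.1.len ∧ q.len < r.2.len ∧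
      ForcesNotComputes c r.1 r.2 := by
  by_cases h : ∃ B v, q.PrefixOf B ∧ v ∈ c.eval (charFn B) p.len
  · obtain ⟨B, v, hB, hv⟩ := h
    obtain ⟨u, hu⟩ := c.hasFiniteUse_eval p.len hv
    refine ⟨(⟨p.len + 1, Function.update p.val p.len (decide (v = 0))⟩, ⟨max u (q.len + 1), B⟩),
      ⟨⟨by simp, fun i hi => Function.update_of_ne (ne_of_lt hi) _ _⟩, ⟨by simp, hB⟩⟩,
      by simp, by simp, ?_⟩
    intro A B' hA hB' hc
    have hv' : v ∈ c.eval (charFn B') p.len :=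
      hu _ (hB'.mono (Iio_subset_Iio (le_max_left _ _))).charFn
    have hAp : A p.len = decide (v = 0) := by simpa using hA p.len.lt_succ_self
    rw [hc, Part.mem_some_iff, charFn, hAp] at hv'
    by_cases hv0 : v = 0 <;> simp [hv0] at hv'
  · push Not at h
    refine ⟨(⟨p.len + 1, p.val⟩, ⟨q.len + 1, q.val⟩), ⟨le_succ_len p, le_succ_len q⟩,
      by simp, by simp, fun A B _ hB hc => ?_⟩
    exact h B (charFn A p.len) (hB.of_le (le_succ_len q)) (hc ▸ Part.mem_some _)

noncomputable def extend (c : OracleCode) (p q : Condition) : Condition × Condition :=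
  (exists_forcesNotComputes c p q).choose

theorem extend_spec (c : OracleCode) (p q : Condition) :
    (p, q) ≤ extend c p q ∧ p.len < (extend c p q).1.len ∧ q.len < (extend c p q).2.len ∧
      ForcesNotComputes c (extend c p q).1 (extend c p q).2 :=
  (exists_forcesNotComputes c p q).choose_spec

/-- Stage `s + 1` meets both requirements for the code `e s`, the second one by exchanging the
roles of the two sets. -/
noncomputable def stage (e : ℕ → OracleCode) : ℕ → Condition × Condition
  | 0 => (⟨0, fun _ => false⟩, ⟨0, fun _ => false⟩)
  | s + 1 =>
    let r := extend (e s) (stage e s).1 (stage e s).2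
    (extend (e s) r.2 r.1).swap

section Stage

variable (e : ℕ → OracleCode) (s : ℕ)

theorem extend_le_stage_succ : extend (e s) (stage e s).1 (stage e s).2 ≤ stage e (s + 1) :=
  Prod.swap_le_swap.1 (extend_spec _ _ _).1

theorem stage_le_succ : stage e s ≤ stage e (s + 1) :=
  (extend_spec _ _ _).1.trans (extend_le_stage_succ e s)

theorem le_len_stage : s ≤ (stage e s).1.len ∧ s ≤ (stage e s).2.len := by
  induction s with
  | zero => exact ⟨le_rfl, le_rfl⟩
  | succ s ih =>
    obtain ⟨-, h1, h2, -⟩ := extend_spec (e s) (stage e s).1 (stage e s).2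
    obtain ⟨⟨hle1, -⟩, ⟨hle2, -⟩⟩ := extend_le_stage_succ e s
    omega

theorem forcesNotComputes_stage_succ :
    ForcesNotComputes (e s) (stage e (s + 1)).1 (stage e (s + 1)).2 ∧
      ForcesNotComputes (e s) (stage e (s + 1)).2 (stage e (s + 1)).1 :=
  ⟨(extend_spec _ _ _).2.2.2.of_le (extend_le_stage_succ e s).1 (extend_le_stage_succ e s).2,
    (extend_spec _ _ _).2.2.2⟩

end Stage

theorem not_turingLE_of_forall_forcesNotComputes {A B : ℕ → Bool}
    (h : ∀ c, ∃ p q, p.PrefixOf A ∧ q.PrefixOf B ∧ ForcesNotComputes c p q) :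
    ¬ TuringLE A B := by
  intro hAB
  obtain ⟨c, hc⟩ := RecursiveInFn.exists_eval_eq hAB
  obtain ⟨p, q, hA, hB, hpq⟩ := h c
  exact hpq A B hA hB hc

end KleenePost

open KleenePost Condition in
/-- Kleene–Post: there exist Turing incomparable sets `A, B ⊆ ℕ`. -/
theorem kleene_post :
    ∃ A B : ℕ → Bool, ¬ TuringLE A B ∧ ¬ TuringLE B A := by
  obtain ⟨e, he⟩ := exists_surjective_nat OracleCode
  have hmono : Monotone (stage e) := monotone_nat_of_le_succ (stage_le_succ e)
  have hA := prefixOf_limit (monotone_fst.comp hmono) fun s => (le_len_stage e s).1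
  have hB := prefixOf_limit (monotone_snd.comp hmono) fun s => (le_len_stage e s).2
  refine ⟨limit (Prod.fst ∘ stage e), limit (Prod.snd ∘ stage e),
    not_turingLE_of_forall_forcesNotComputes fun c => ?_,
    not_turingLE_of_forall_forcesNotComputes fun c => ?_⟩ <;> obtain ⟨s, rfl⟩ := he c
  · exact ⟨_, _, hA (s + 1), hB (s + 1), (forcesNotComputes_stage_succ e s).1⟩
  · exact ⟨_, _, hB (s + 1), hA (s + 1), (forcesNotComputes_stage_succ e s).2⟩
end

section
/- For every function f : ℕ → ℕ there exists a function g : ℕ → ℕ that is not dominated by any f-computable function: for every index e and every k there is n ≥ k such that whenever φ_e^f(n) converges to m, one has m < g(n). (Principle HYP: existence of hyperimmune-relative functions.) -/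
/-- HYP: given any enumeration `Phi` of the partial functions
computable from an oracle, for every `f : ℕ → ℕ` there is a `g : ℕ → ℕ` not
dominated by any `f`-computable function: for every index `e` and every `k`
there is `n ≥ k` such that whenever `φ_e^f(n)` converges to `m`, `m < g n`. -/
theorem hyp_exists (Phi : ℕ → (ℕ → ℕ) → ℕ → Part ℕ) (f : ℕ → ℕ) :
    ∃ g : ℕ → ℕ, ∀ e k : ℕ, ∃ n : ℕ, k ≤ n ∧
      ∀ m : ℕ, m ∈ Phi e f n → m < g n := by
  classical
  set v : ℕ → ℕ → ℕ := fun e n =>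
    if h : (Phi e f n).Dom then (Phi e f n).get h else 0 with hv
  refine ⟨fun n => (Finset.range (n+1)).sup (fun e => v e n) + 1, ?_⟩
  intro e k
  refine ⟨max e k, le_max_right _ _, ?_⟩
  intro m hm
  have hd : (Phi e f (max e k)).Dom := hm.fst
  have hval : v e (max e k) = m := by
    simp [hv, hd, hm.snd]
  have hle : v e (max e k) ≤ (Finset.range (max e k + 1)).sup (fun e' => v e' (max e k)) :=
    Finset.le_sup (f := fun e' => v e' (max e k)) (Finset.mem_range.mpr (Nat.lt_succ_of_le (le_max_left e k)))
  simp only [ge_iff_le]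
  show m < (Finset.range (max e k + 1)).sup (fun e' => v e' (max e k)) + 1
  omega
end

section
/- For every X ⊆ ℕ there exists a 1-generic sequence Y relative to X: for every X-c.e. set S of binary strings, either some initial segment of Y lies in S, or some initial segment of Y has no extension in S. -/
/-- `σ ∈ S_f^X`: the `X`-c.e. set of binary strings coded by the (computable)
function `f`, via `σ ∈ S_f^X ↔ ∃ τ, f⟨σ, τ, X↾|τ|⟩ = 0`. -/
def memS (f : ℕ → ℕ) (X : ℕ → Bool) (σ : List Bool) : Prop :=
  ∃ τ : List Bool,
    f (Nat.pair (Encodable.encode σ)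
        (Nat.pair (Encodable.encode τ)
          (Encodable.encode ((List.range τ.length).map X)))) = 0

open Classical Nat.Partrec List

noncomputable section

/-- The requirement associated to a partrec code `c`: `σ` is enumerated. -/
def genP (X : ℕ → Bool) (c : Nat.Partrec.Code) (σ : List Bool) : Prop :=
  ∃ τ : List Bool,
    c.eval (Nat.pair (Encodable.encode σ)
        (Nat.pair (Encodable.encode τ)
          (Encodable.encode ((List.range τ.length).map X)))) = Part.some 0

/-- Finite-extension construction: at stage `e+1`, meet the requirement for
the `e`-th code if possible, then pad with one bit so lengths grow. -/
def stg (X : ℕ → Bool) : ℕ → List Bool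
  | 0 => []
  | e+1 =>
    (if h : ∃ σ, stg X e <+: σ ∧ genP X (Denumerable.ofNat Nat.Partrec.Code e) σ
     then h.choose else stg X e) ++ [false]

lemma stg_prefix_succ (X : ℕ → Bool) (e : ℕ) : stg X e <+: stg X (e+1) := by
  rw [stg]
  split
  · next h => exact h.choose_spec.1.trans (prefix_append _ _)
  · exact prefix_append _ _

lemma stg_mono (X : ℕ → Bool) {e e' : ℕ} (h : e ≤ e') : stg X e <+: stg X e' := by
  induction h with
  | refl => exact prefix_rfl
  | step _ ih => exact ih.trans (stg_prefix_succ X _)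

lemma stg_length (X : ℕ → Bool) (e : ℕ) : e ≤ (stg X e).length := by
  induction e with
  | zero => simp [stg]
  | succ e ih =>
    rw [stg]
    split
    · next h =>
      have := h.choose_spec.1.length_le
      simp; omega
    · simp; omega

/-- The generic sequence: the union of the stages. -/
def genY (X : ℕ → Bool) (n : ℕ) : Bool := (stg X (n+1)).getD n false

lemma genY_eq (X : ℕ → Bool) {n m : ℕ} (h : n < (stg X m).length) :
    genY X n = (stg X m)[n] := by
  have h1 : n < (stg X (n+1)).length := lt_of_lt_of_le (Nat.lt_succ_self n) (stg_length X (n+1))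
  rw [genY, List.getD_eq_getElem _ _ h1]
  rcases le_total (n+1) m with hle | hle
  · exact ((stg_mono X hle).getElem h1)
  · exact (stg_mono X hle).getElem h |>.symm

lemma map_range_genY (X : ℕ → Bool) {n m : ℕ} (h : n ≤ (stg X m).length) :
    (List.range n).map (genY X) = (stg X m).take n := by
  apply List.ext_getElem
  · simp; omega
  · intro i h1 h2
    simp only [List.getElem_map, List.getElem_range, List.getElem_take]
    simp at h1
    exact genY_eq X (by omega)

end

/-- 1-GEN: for every `X ⊆ ℕ` there is a 1-generic `Y` relative to
`X`: for every `X`-c.e. set `S` of binary strings (coded by a computable `f`),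
either some initial segment of `Y` lies in `S`, or some initial segment of `Y`
has no extension in `S`. -/
theorem one_generic_exists (X : ℕ → Bool) :
    ∃ Y : ℕ → Bool, ∀ f : ℕ → ℕ, Computable f →
      (∃ n : ℕ, memS f X ((List.range n).map Y)) ∨
      (∃ m : ℕ, ∀ σ : List Bool, ((List.range m).map Y) <+: σ → ¬ memS f X σ) := by
  refine ⟨genY X, fun f hf => ?_⟩
  obtain ⟨c, hc⟩ := Nat.Partrec.Code.exists_code.1 (Partrec.nat_iff.1 hf.partrec)
  have hPmem : ∀ σ, genP X c σ ↔ memS f X σ := by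
    intro σ
    constructor <;> rintro ⟨τ, hτ⟩ <;> refine ⟨τ, ?_⟩
    · have := hτ; rw [hc] at this
      simpa [PFun.coe_val] using this
    · rw [hc]; simp [PFun.coe_val, hτ]
  set e := Encodable.encode c with he
  have hce : Denumerable.ofNat Nat.Partrec.Code e = c := Denumerable.ofNat_encode c
  by_cases h : ∃ σ, stg X e <+: σ ∧ genP X (Denumerable.ofNat Nat.Partrec.Code e) σ
  · left
    obtain ⟨hpre, hP⟩ := h.choose_spec
    refine ⟨h.choose.length, ?_⟩
    have hpre2 : h.choose <+: stg X (e+1) := by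
      rw [stg, dif_pos h]; exact List.prefix_append _ _
    have : (List.range h.choose.length).map (genY X) = h.choose := by
      rw [map_range_genY X hpre2.length_le, ← List.prefix_iff_eq_take.mp hpre2]
    rw [this]
    exact (hPmem _).mp (hce ▸ hP)
  · right
    refine ⟨(stg X e).length, fun σ hσ hmem => ?_⟩
    apply h
    refine ⟨σ, ?_, hce.symm ▸ (hPmem σ).mpr hmem⟩
    rwa [map_range_genY X le_rfl, List.take_length] at hσ
end
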